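/- (Equation (18), Section 5) In the Section-5 setup below, for all i, j ∈ ℤ one has d d̄ Φ_{i,j} − (dΦ_{i,0})(dΦ_{0,j}) = 0 (an identity of m×m matrices of 2-forms). In particular, φ := −Φ_{0,0} satisfies d d̄ φ + (dφ)(dφ) = 0. -/

import Mathlib

/-- A bidifferential calculus: a unital graded associative algebra
`Ω = ⊕_{r≥0} Ω^r` over a field `𝕂`, together with two `𝕂`-linear graded
derivations `d`, `dbar` of degree one satisfying `d² = d̄² = d d̄ + d̄ d = 0`. -/
structure BidiffCalculus (𝕂 : Type) [Field 𝕂] (Ω : Type) [Ring Ω] [Algebra 𝕂 Ω] where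
  grade : ℕ → Submodule 𝕂 Ω
  internal : DirectSum.IsInternal grade
  one_mem : (1 : Ω) ∈ grade 0
  mul_mem : ∀ (r s : ℕ), ∀ a ∈ grade r, ∀ b ∈ grade s, a * b ∈ grade (r + s)
  d : Ω →ₗ[𝕂] Ω
  dbar : Ω →ₗ[𝕂] Ω
  d_grade : ∀ (r : ℕ), ∀ a ∈ grade r, d a ∈ grade (r + 1)
  dbar_grade : ∀ (r : ℕ), ∀ a ∈ grade r, dbar a ∈ grade (r + 1)
  d_leibniz : ∀ (r : ℕ), ∀ a ∈ grade r, ∀ b : Ω,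
      d (a * b) = d a * b + ((-1 : ℤ) ^ r) • (a * d b)
  dbar_leibniz : ∀ (r : ℕ), ∀ a ∈ grade r, ∀ b : Ω,
      dbar (a * b) = dbar a * b + ((-1 : ℤ) ^ r) • (a * dbar b)
  d_d : ∀ a : Ω, d (d a) = 0
  dbar_dbar : ∀ a : Ω, dbar (dbar a) = 0
  d_dbar_anticomm : ∀ a : Ω, d (dbar a) + dbar (d a) = 0

namespace BidiffCalculus

variable {𝕂 : Type} [Field 𝕂] {Ω : Type} [Ring Ω] [Algebra 𝕂 Ω]

/-- Entrywise action of `d` on matrices over `Ω`. -/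
def matD (S : BidiffCalculus 𝕂 Ω) {m n : ℕ} (M : Matrix (Fin m) (Fin n) Ω) :
    Matrix (Fin m) (Fin n) Ω := M.map S.d

/-- Entrywise action of `dbar` on matrices over `Ω`. -/
def matDbar (S : BidiffCalculus 𝕂 Ω) {m n : ℕ} (M : Matrix (Fin m) (Fin n) Ω) :
    Matrix (Fin m) (Fin n) Ω := M.map S.dbar

/-- A matrix has all entries of degree `r`. -/
def MatIn (S : BidiffCalculus 𝕂 Ω) (r : ℕ) {m n : ℕ} (M : Matrix (Fin m) (Fin n) Ω) : Prop :=
  ∀ i j, M i j ∈ S.grade r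

end BidiffCalculus

/-- `Φ_{i,j} = θ Δ^i Ω̂^{-1} Γ^j η`, with negative powers given by powers of inverses. -/
def Phi {R : Type} [Ring R] {m n : ℕ} (θ : Matrix (Fin m) (Fin n) R)
    (η : Matrix (Fin n) (Fin m) R) (Δ Γ W : (Matrix (Fin n) (Fin n) R)ˣ) (i j : ℤ) :
    Matrix (Fin m) (Fin m) R :=
  θ * Units.val (Δ ^ i) * Units.val W⁻¹ * Units.val (Γ ^ j) * η

namespace BidiffCalculus

variable {𝕂 : Type} [Field 𝕂] {Ω : Type} [Ring Ω] [Algebra 𝕂 Ω]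
variable (S : BidiffCalculus 𝕂 Ω)

lemma d_one : S.d 1 = 0 := by
  have h := S.d_leibniz 0 1 S.one_mem 1
  simp only [one_mul, mul_one, pow_zero, one_smul] at h
  exact (left_eq_add.mp h)

lemma dbar_one : S.dbar 1 = 0 := by
  have h := S.dbar_leibniz 0 1 S.one_mem 1
  simp only [one_mul, mul_one, pow_zero, one_smul] at h
  exact (left_eq_add.mp h)

variable {m n p : ℕ}

lemma matD_sub (M N : Matrix (Fin m) (Fin n) Ω) :
    S.matD (M - N) = S.matD M - S.matD N := by
  ext i j
  simp [matD, map_sub]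

lemma matD_neg (M : Matrix (Fin m) (Fin n) Ω) : S.matD (-M) = -S.matD M := by
  ext i j
  simp [matD, map_neg]

lemma matDbar_neg (M : Matrix (Fin m) (Fin n) Ω) : S.matDbar (-M) = -S.matDbar M := by
  ext i j
  simp [matDbar, map_neg]

lemma matD_one : S.matD (1 : Matrix (Fin n) (Fin n) Ω) = 0 := by
  ext i j
  by_cases h : i = j <;> simp [matD, Matrix.one_apply, h, S.d_one]

lemma matDbar_one : S.matDbar (1 : Matrix (Fin n) (Fin n) Ω) = 0 := by
  ext i j
  by_cases h : i = j <;> simp [matDbar, Matrix.one_apply, h, S.dbar_one]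

lemma matD_matD (M : Matrix (Fin m) (Fin n) Ω) : S.matD (S.matD M) = 0 := by
  ext i j
  simpa [matD] using S.d_d (M i j)

lemma matD_mul₀ (M : Matrix (Fin m) (Fin n) Ω) (hM : S.MatIn 0 M)
    (N : Matrix (Fin n) (Fin p) Ω) :
    S.matD (M * N) = S.matD M * N + M * S.matD N := by
  ext i j
  simp only [matD, Matrix.map_apply, Matrix.mul_apply, Matrix.add_apply]
  rw [map_sum, ← Finset.sum_add_distrib]
  refine Finset.sum_congr rfl fun k _ => ?_
  simpa using S.d_leibniz 0 (M i k) (hM i k) (N k j)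

lemma matDbar_mul₀ (M : Matrix (Fin m) (Fin n) Ω) (hM : S.MatIn 0 M)
    (N : Matrix (Fin n) (Fin p) Ω) :
    S.matDbar (M * N) = S.matDbar M * N + M * S.matDbar N := by
  ext i j
  simp only [matDbar, Matrix.map_apply, Matrix.mul_apply, Matrix.add_apply]
  rw [map_sum, ← Finset.sum_add_distrib]
  refine Finset.sum_congr rfl fun k _ => ?_
  simpa using S.dbar_leibniz 0 (M i k) (hM i k) (N k j)

lemma matD_mul₁ (M : Matrix (Fin m) (Fin n) Ω) (hM : S.MatIn 1 M)
    (N : Matrix (Fin n) (Fin p) Ω) :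
    S.matD (M * N) = S.matD M * N - M * S.matD N := by
  ext i j
  simp only [matD, Matrix.map_apply, Matrix.mul_apply, Matrix.sub_apply]
  rw [map_sum, ← Finset.sum_sub_distrib]
  refine Finset.sum_congr rfl fun k _ => ?_
  have h := S.d_leibniz 1 (M i k) (hM i k) (N k j)
  simpa [sub_eq_add_neg] using h

lemma matIn_mul {M : Matrix (Fin m) (Fin n) Ω} {N : Matrix (Fin n) (Fin p) Ω}
    (hM : S.MatIn 0 M) (hN : S.MatIn 0 N) : S.MatIn 0 (M * N) := by
  intro i j
  rw [Matrix.mul_apply]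
  exact Submodule.sum_mem _ fun k _ => by simpa using S.mul_mem 0 0 _ (hM i k) _ (hN k j)

lemma matIn_one : S.MatIn 0 (1 : Matrix (Fin n) (Fin n) Ω) := by
  intro i j
  by_cases h : i = j <;> simp [Matrix.one_apply, h, S.one_mem, Submodule.zero_mem]

lemma matIn_zpow (U : (Matrix (Fin n) (Fin n) Ω)ˣ) (hU : S.MatIn 0 (Units.val U))
    (hUi : S.MatIn 0 (Units.val U⁻¹)) : ∀ i : ℤ, S.MatIn 0 (Units.val (U ^ i)) := by
  intro i
  induction i using Int.induction_on with
  | zero => simpa using S.matIn_one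
  | succ k ih =>
      rw [zpow_add_one, Units.val_mul]
      exact S.matIn_mul ih hU
  | pred k ih =>
      rw [zpow_sub_one, Units.val_mul]
      exact S.matIn_mul ih hUi

lemma matD_inv (U : (Matrix (Fin n) (Fin n) Ω)ˣ) (hU : S.MatIn 0 (Units.val U)) :
    S.matD (Units.val U⁻¹) = -(Units.val U⁻¹ * S.matD (Units.val U) * Units.val U⁻¹) := by
  have h := S.matD_mul₀ (Units.val U) hU (Units.val U⁻¹)
  rw [Units.mul_inv, S.matD_one] at h
  have key : Units.val U * S.matD (Units.val U⁻¹)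
      = -(S.matD (Units.val U) * Units.val U⁻¹) :=
    eq_neg_of_add_eq_zero_right h.symm
  calc S.matD (Units.val U⁻¹)
      = Units.val U⁻¹ * (Units.val U * S.matD (Units.val U⁻¹)) := by
        rw [← mul_assoc, Units.inv_mul, one_mul]
    _ = Units.val U⁻¹ * -(S.matD (Units.val U) * Units.val U⁻¹) := by rw [key]
    _ = -(Units.val U⁻¹ * S.matD (Units.val U) * Units.val U⁻¹) := by
        rw [mul_neg, mul_assoc]

lemma matDbar_inv (U : (Matrix (Fin n) (Fin n) Ω)ˣ) (hU : S.MatIn 0 (Units.val U)) :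
    S.matDbar (Units.val U⁻¹)
      = -(Units.val U⁻¹ * S.matDbar (Units.val U) * Units.val U⁻¹) := by
  have h := S.matDbar_mul₀ (Units.val U) hU (Units.val U⁻¹)
  rw [Units.mul_inv, S.matDbar_one] at h
  have key : Units.val U * S.matDbar (Units.val U⁻¹)
      = -(S.matDbar (Units.val U) * Units.val U⁻¹) :=
    eq_neg_of_add_eq_zero_right h.symm
  calc S.matDbar (Units.val U⁻¹)
      = Units.val U⁻¹ * (Units.val U * S.matDbar (Units.val U⁻¹)) := by
        rw [← mul_assoc, Units.inv_mul, one_mul]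
    _ = Units.val U⁻¹ * -(S.matDbar (Units.val U) * Units.val U⁻¹) := by rw [key]
    _ = -(Units.val U⁻¹ * S.matDbar (Units.val U) * Units.val U⁻¹) := by
        rw [mul_neg, mul_assoc]

/-- `d̄` on integer powers of `Δ`. -/
lemma dbar_zpow_right (U : (Matrix (Fin n) (Fin n) Ω)ˣ) (lam : Matrix (Fin n) (Fin n) Ω)
    (hU : S.MatIn 0 (Units.val U)) (hUi : S.MatIn 0 (Units.val U⁻¹))
    (h : S.matDbar (Units.val U)
      = S.matD (Units.val U) * Units.val U + Units.val U * lam - lam * Units.val U) :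
    ∀ i : ℤ, S.matDbar (Units.val (U ^ i))
      = S.matD (Units.val (U ^ i)) * Units.val U + Units.val (U ^ i) * lam
        - lam * Units.val (U ^ i) := by
  have c1 : Units.val U * Units.val U⁻¹ = (1 : Matrix (Fin n) (Fin n) Ω) := U.mul_inv
  have c2 : Units.val U⁻¹ * Units.val U = (1 : Matrix (Fin n) (Fin n) Ω) := U.inv_mul
  have c1' : ∀ t : Matrix (Fin n) (Fin n) Ω,
      Units.val U * (Units.val U⁻¹ * t) = t := fun t => by rw [← mul_assoc, c1, one_mul]
  have c2' : ∀ t : Matrix (Fin n) (Fin n) Ω,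
      Units.val U⁻¹ * (Units.val U * t) = t := fun t => by rw [← mul_assoc, c2, one_mul]
  have hi : S.matDbar (Units.val U⁻¹)
      = S.matD (Units.val U⁻¹) * Units.val U + Units.val U⁻¹ * lam
        - lam * Units.val U⁻¹ := by
    rw [S.matDbar_inv U hU, S.matD_inv U hU, h]
    simp only [mul_add, add_mul, mul_sub, sub_mul, neg_mul, mul_neg, mul_assoc,
      c1, c2, c1', c2', mul_one, one_mul]
    abel
  intro i
  induction i using Int.induction_on with
  | zero => simp [S.matD_one, S.matDbar_one]
  | succ k ih =>
      rw [zpow_add_one, Units.val_mul,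
        S.matDbar_mul₀ _ (S.matIn_zpow U hU hUi k) _,
        S.matD_mul₀ _ (S.matIn_zpow U hU hUi k) _, ih, h]
      noncomm_ring
  | pred k ih =>
      rw [zpow_sub_one, Units.val_mul,
        S.matDbar_mul₀ _ (S.matIn_zpow U hU hUi (-k)) _,
        S.matD_mul₀ _ (S.matIn_zpow U hU hUi (-k)) _, ih, hi]
      simp only [mul_add, add_mul, mul_sub, sub_mul, neg_mul, mul_neg, mul_assoc,
        c1, c2, c1', c2', mul_one, one_mul]
      abel

/-- `d̄` on integer powers of `Γ`. -/
lemma dbar_zpow_left (V : (Matrix (Fin n) (Fin n) Ω)ˣ) (kap : Matrix (Fin n) (Fin n) Ω)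
    (hV : S.MatIn 0 (Units.val V)) (hVi : S.MatIn 0 (Units.val V⁻¹))
    (h : S.matDbar (Units.val V)
      = Units.val V * S.matD (Units.val V) + kap * Units.val V - Units.val V * kap) :
    ∀ j : ℤ, S.matDbar (Units.val (V ^ j))
      = Units.val V * S.matD (Units.val (V ^ j)) + kap * Units.val (V ^ j)
        - Units.val (V ^ j) * kap := by
  have c1 : Units.val V * Units.val V⁻¹ = (1 : Matrix (Fin n) (Fin n) Ω) := V.mul_inv
  have c2 : Units.val V⁻¹ * Units.val V = (1 : Matrix (Fin n) (Fin n) Ω) := V.inv_mul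
  have c1' : ∀ t : Matrix (Fin n) (Fin n) Ω,
      Units.val V * (Units.val V⁻¹ * t) = t := fun t => by rw [← mul_assoc, c1, one_mul]
  have c2' : ∀ t : Matrix (Fin n) (Fin n) Ω,
      Units.val V⁻¹ * (Units.val V * t) = t := fun t => by rw [← mul_assoc, c2, one_mul]
  have hi : S.matDbar (Units.val V⁻¹)
      = Units.val V * S.matD (Units.val V⁻¹) + kap * Units.val V⁻¹
        - Units.val V⁻¹ * kap := by
    rw [S.matDbar_inv V hV, S.matD_inv V hV, h]
    simp only [mul_add, add_mul, mul_sub, sub_mul, neg_mul, mul_neg, mul_assoc,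
      c1, c2, c1', c2', mul_one, one_mul]
    abel
  have hcomm : ∀ i : ℤ, Units.val (V ^ i) * Units.val V = Units.val V * Units.val (V ^ i) := by
    intro i
    rw [← Units.val_mul, ← Units.val_mul, ← zpow_add_one, ← zpow_one_add, add_comm]
  have hcomm' : ∀ (i : ℤ) (t : Matrix (Fin n) (Fin n) Ω),
      Units.val (V ^ i) * (Units.val V * t) = Units.val V * (Units.val (V ^ i) * t) := by
    intro i t
    rw [← mul_assoc, hcomm i, mul_assoc]
  intro j
  induction j using Int.induction_on with
  | zero => simp [S.matD_one, S.matDbar_one]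
  | succ k ih =>
      rw [zpow_add_one, Units.val_mul,
        S.matDbar_mul₀ _ (S.matIn_zpow V hV hVi k) _,
        S.matD_mul₀ _ (S.matIn_zpow V hV hVi k) _, ih, h]
      simp only [mul_add, add_mul, mul_sub, sub_mul, mul_assoc, hcomm', hcomm]
      abel
  | pred k ih =>
      rw [zpow_sub_one, Units.val_mul,
        S.matDbar_mul₀ _ (S.matIn_zpow V hV hVi (-k)) _,
        S.matD_mul₀ _ (S.matIn_zpow V hV hVi (-k)) _, ih, hi]
      simp only [mul_add, add_mul, mul_sub, sub_mul, mul_assoc, hcomm', hcomm]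
      abel

end BidiffCalculus

/-- Equation (18), Section 5:
`d d̄ Φ_{i,j} − (dΦ_{i,0})(dΦ_{0,j}) = 0`; in particular `φ := −Φ_{0,0}` satisfies
`d d̄ φ + (dφ)(dφ) = 0`. -/
theorem Phi_eqs_recurrence
    {𝕂 : Type} [Field 𝕂] [CharZero 𝕂] {Ω : Type} [Ring Ω] [Algebra 𝕂 Ω]
    (S : BidiffCalculus 𝕂 Ω) {m n : ℕ}
    (Δ Γ W : (Matrix (Fin n) (Fin n) Ω)ˣ)
    (lam kap : Matrix (Fin n) (Fin n) Ω)
    (θ : Matrix (Fin m) (Fin n) Ω) (η : Matrix (Fin n) (Fin m) Ω)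
    (hΔ : S.MatIn 0 (Units.val Δ)) (hΔinv : S.MatIn 0 (Units.val Δ⁻¹))
    (hΓ : S.MatIn 0 (Units.val Γ)) (hΓinv : S.MatIn 0 (Units.val Γ⁻¹))
    (hW : S.MatIn 0 (Units.val W)) (hWinv : S.MatIn 0 (Units.val W⁻¹))
    (hlam : S.MatIn 1 lam) (hkap : S.MatIn 1 kap)
    (hθ : S.MatIn 0 θ) (hη : S.MatIn 0 η)
    (heqΔ : S.matDbar (Units.val Δ) + (lam * Units.val Δ - Units.val Δ * lam)
        = S.matD (Units.val Δ) * Units.val Δ)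
    (heqlam : S.matDbar lam + lam * lam = S.matD lam * Units.val Δ)
    (heqΓ : S.matDbar (Units.val Γ) - (kap * Units.val Γ - Units.val Γ * kap)
        = Units.val Γ * S.matD (Units.val Γ))
    (heqkap : S.matDbar kap - kap * kap = Units.val Γ * S.matD kap)
    (heqθ : S.matDbar θ = S.matD θ * Units.val Δ + θ * lam)
    (heqη : S.matDbar η = Units.val Γ * S.matD η + kap * η)
    (hSyl : Units.val Γ * Units.val W - Units.val W * Units.val Δ = η * θ)
    (heqW : S.matDbar (Units.val W) = S.matD (Units.val W) * Units.val Δ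
        - S.matD (Units.val Γ) * Units.val W + kap * Units.val W + Units.val W * lam
        + S.matD η * θ) :
    (∀ i j : ℤ,
      S.matD (S.matDbar (Phi θ η Δ Γ W i j))
        - S.matD (Phi θ η Δ Γ W i 0) * S.matD (Phi θ η Δ Γ W 0 j) = 0)
    ∧ S.matD (S.matDbar (-Phi θ η Δ Γ W 0 0))
        + S.matD (-Phi θ η Δ Γ W 0 0) * S.matD (-Phi θ η Δ Γ W 0 0) = 0 := by
    classical
  -- basic facts about integer powers
  have hX0 : ∀ i : ℤ, S.MatIn 0 (Units.val (Δ ^ i)) := S.matIn_zpow Δ hΔ hΔinv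
  have hY0 : ∀ j : ℤ, S.MatIn 0 (Units.val (Γ ^ j)) := S.matIn_zpow Γ hΓ hΓinv
  have hbA : S.matDbar (Units.val Δ)
      = S.matD (Units.val Δ) * Units.val Δ + Units.val Δ * lam - lam * Units.val Δ := by
    rw [← heqΔ]; abel
  have hbG : S.matDbar (Units.val Γ)
      = Units.val Γ * S.matD (Units.val Γ) + kap * Units.val Γ - Units.val Γ * kap := by
    rw [← heqΓ]; abel
  have hXe : ∀ i : ℤ, S.matDbar (Units.val (Δ ^ i))
      = S.matD (Units.val (Δ ^ i)) * Units.val Δ + Units.val (Δ ^ i) * lam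
        - lam * Units.val (Δ ^ i) := S.dbar_zpow_right Δ lam hΔ hΔinv hbA
  have hYe : ∀ j : ℤ, S.matDbar (Units.val (Γ ^ j))
      = Units.val Γ * S.matD (Units.val (Γ ^ j)) + kap * Units.val (Γ ^ j)
        - Units.val (Γ ^ j) * kap := S.dbar_zpow_left Γ kap hΓ hΓinv hbG
  have hDWi : S.matD (Units.val W⁻¹)
      = -(Units.val W⁻¹ * S.matD (Units.val W) * Units.val W⁻¹) := S.matD_inv W hW
  have hDbWi : S.matDbar (Units.val W⁻¹)
      = -(Units.val W⁻¹ * S.matDbar (Units.val W) * Units.val W⁻¹) := S.matDbar_inv W hW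
  have hWvWi : Units.val W * Units.val W⁻¹ = (1 : Matrix (Fin n) (Fin n) Ω) := W.mul_inv
  have hWiWv : Units.val W⁻¹ * Units.val W = (1 : Matrix (Fin n) (Fin n) Ω) := W.inv_mul
  have hWvWi' : ∀ t : Matrix (Fin n) (Fin m) Ω,
      Units.val W * (Units.val W⁻¹ * t) = t := fun t => by rw [← Matrix.mul_assoc, hWvWi, Matrix.one_mul]
  have hWiWv' : ∀ t : Matrix (Fin n) (Fin m) Ω,
      Units.val W⁻¹ * (Units.val W * t) = t := fun t => by rw [← Matrix.mul_assoc, hWiWv, Matrix.one_mul]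
  -- Sylvester equation, massaged
  have h4 : Units.val Γ * Units.val W - η * θ = Units.val W * Units.val Δ := by
    rw [← hSyl]; abel
  have hA : Units.val W⁻¹ * (Units.val Γ * Units.val W - η * θ) = Units.val Δ := by
    rw [h4, ← Matrix.mul_assoc, hWiWv, Matrix.one_mul]
  have hAWi : ∀ t : Matrix (Fin n) (Fin m) Ω,
      Units.val Δ * (Units.val W⁻¹ * t)
        = Units.val W⁻¹ * (Units.val Γ * t)
          - Units.val W⁻¹ * (η * (θ * (Units.val W⁻¹ * t))) := by
    intro t
    rw [← hA]
    simp only [Matrix.sub_mul, Matrix.mul_sub, Matrix.mul_assoc, hWvWi']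
  -- commutation of Δ with Δ^i and of Γ^j with Γ
  have hXA : ∀ i : ℤ, Units.val Δ * Units.val (Δ ^ i) = Units.val (Δ ^ i) * Units.val Δ := by
    intro i
    rw [← Units.val_mul, ← Units.val_mul, ← zpow_add_one, ← zpow_one_add, add_comm]
  have hXA' : ∀ (i : ℤ) (t : Matrix (Fin n) (Fin m) Ω),
      Units.val Δ * (Units.val (Δ ^ i) * t)
        = Units.val (Δ ^ i) * (Units.val Δ * t) := by
    intro i t
    rw [← Matrix.mul_assoc, hXA i, Matrix.mul_assoc]
  have hYG : ∀ j : ℤ, Units.val (Γ ^ j) * Units.val Γ = Units.val Γ * Units.val (Γ ^ j) := by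
    intro j
    rw [← Units.val_mul, ← Units.val_mul, ← zpow_add_one, ← zpow_one_add, add_comm]
  have hYG' : ∀ (j : ℤ) (t : Matrix (Fin n) (Fin m) Ω),
      Units.val (Γ ^ j) * (Units.val Γ * t)
        = Units.val Γ * (Units.val (Γ ^ j) * t) := by
    intro j t
    rw [← Matrix.mul_assoc, hYG j, Matrix.mul_assoc]
  have hYsucc : ∀ j : ℤ, Units.val (Γ ^ (j + 1)) = Units.val Γ * Units.val (Γ ^ j) := by
    intro j
    rw [zpow_add_one, Units.val_mul, hYG j]
  -- the key recurrence
  have keyEq : ∀ i j : ℤ,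
      S.matDbar (Phi θ η Δ Γ W i j)
        = S.matD (Phi θ η Δ Γ W i (j + 1))
          - S.matD (Phi θ η Δ Γ W i 0) * Phi θ η Δ Γ W 0 j := by
    intro i j
    simp only [Phi, zpow_zero, Units.val_one, Matrix.one_mul, Matrix.mul_one, hYsucc j, Matrix.mul_assoc,
      S.matDbar_mul₀ _ hθ, S.matDbar_mul₀ _ (hX0 i), S.matDbar_mul₀ _ hWinv,
      S.matDbar_mul₀ _ (hY0 j),
      heqθ, heqη, hXe i, hYe j, hDbWi, heqW,
      S.matD_mul₀ _ hθ, S.matD_mul₀ _ (hX0 i), S.matD_mul₀ _ hWinv, S.matD_mul₀ _ hΓ,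
      S.matD_mul₀ _ (hY0 j), hDWi,
      Matrix.mul_add, Matrix.add_mul, Matrix.mul_sub, Matrix.sub_mul, Matrix.neg_mul, Matrix.mul_neg,
      hAWi, hWvWi', hWiWv', hXA' i, hYG' j]
    abel
  have hPhi0 : ∀ i j : ℤ, S.MatIn 0 (Phi θ η Δ Γ W i j) := by
    intro i j
    exact S.matIn_mul (S.matIn_mul (S.matIn_mul (S.matIn_mul hθ (hX0 i)) hWinv) (hY0 j)) hη
  have hDPhi1 : ∀ i j : ℤ, S.MatIn 1 (S.matD (Phi θ η Δ Γ W i j)) := by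
    intro i j a b
    exact S.d_grade 0 _ (hPhi0 i j a b)
  have main : ∀ i j : ℤ,
      S.matD (S.matDbar (Phi θ η Δ Γ W i j))
        - S.matD (Phi θ η Δ Γ W i 0) * S.matD (Phi θ η Δ Γ W 0 j) = 0 := by
    intro i j
    rw [keyEq i j, S.matD_sub, S.matD_matD, S.matD_mul₁ _ (hDPhi1 i 0) _, S.matD_matD]
    simp
  refine ⟨main, ?_⟩
  have h00 := main 0 0
  rw [sub_eq_zero] at h00
  rw [S.matDbar_neg, S.matD_neg, S.matD_neg, h00]
  simp
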